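/- Let d ≥ 1 and n ≥ 2 be integers, let v ∈ ℤ^d have every entry coprime to n, and let δ ∈ ℤ^d. Then the wrap-around separation distance of L(n,v,δ) satisfies min_{x,y ∈ L(n,v,δ), x ≠ y} w(x − y) = min_{i=1,…,n−1} (Σ_{k=1}^d w(i·v_k/n)²)^{1/2}; equivalently, the wrap-around reciprocal separation criterion c_WS(L(n,v,δ)) = max_{x ≠ y} w(x−y)^{−1} equals [min_{i=1,…,n−1} Σ_{k=1}^d w(i·v_k/n)²]^{−1/2}. -/

import Mathlib

/-!
Every point of `L(n,v,δ)` is the fractional part of `i·v/n + δ/n + 1/(2n)` for some `i ∈ ℤ`: no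
coordinate of the lattice point is an integer, since its numerator `2(i v_k + δ_k) + 1` over `2n`
is odd, so the constraint `x ∈ [0,1]^d` is the reduction modulo `ℤ^d`. Since `w` is invariant
under integer translations, the wrap-around distance between the points with indices `i, i'` is
`(Σ_k w((i - i') v_k / n)²)^{1/2}`, which depends only on `j = (i - i') mod n`, and by coprimality
the two points coincide exactly when `j = 0`. So the separation distances are exactly the values
for `j = 1, …, n - 1`; all of them are positive, and the finitely many reciprocals are maximised
at the smallest one.
-/

open Finset

/-- Distance from a real number to the nearest integer: w(t) = min over z in ZZ of |t - z|. -/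
noncomputable def nid (t : ℝ) : ℝ := ⨅ z : ℤ, |t - (z : ℝ)|

/-- Wrap-around distance on ℝ^d. -/
noncomputable def wdist {d : ℕ} (u : Fin d → ℝ) : ℝ := Real.sqrt (∑ k, nid (u k) ^ 2)

/-- Lattice-based Latin hypercube design
L(n,v,δ) = { z + i·v/n + δ/n + 1_d/(2n) : z ∈ ℤ^d, i ∈ ℤ } ∩ [0,1]^d. -/
def LHDset (d n : ℕ) (v : Fin d → ℤ) (δ : Fin d → ℝ) : Set (Fin d → ℝ) :=
  {x | (∃ (z : Fin d → ℤ) (i : ℤ),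
          x = fun k => (z k : ℝ) + (i : ℝ) * (v k : ℝ) / n + δ k / n + 1 / (2 * n)) ∧
       ∀ k, x k ∈ Set.Icc (0 : ℝ) 1}

lemma nid_eq_abs_sub_round (t : ℝ) : nid t = |t - round t| :=
  le_antisymm (ciInf_le ⟨0, by rintro _ ⟨z, rfl⟩; positivity⟩ (round t))
    (le_ciInf (round_le t))

lemma nid_add_intCast (t : ℝ) (m : ℤ) : nid (t + m) = nid t := by
  simp only [nid_eq_abs_sub_round, round_add_intCast, Int.cast_add, add_sub_add_right_eq_sub]

lemma nid_eq_zero_iff {t : ℝ} : nid t = 0 ↔ ∃ m : ℤ, t = m := by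
  rw [nid_eq_abs_sub_round, abs_eq_zero, sub_eq_zero]
  exact ⟨fun h => ⟨round t, h⟩, fun ⟨m, hm⟩ => by rw [hm, round_intCast]⟩

lemma nid_fract_sub_fract (a b : ℝ) : nid (Int.fract a - Int.fract b) = nid (a - b) := by
  rw [Int.fract, Int.fract,
    show a - ⌊a⌋ - (b - ⌊b⌋) = a - b + ((⌊b⌋ - ⌊a⌋ : ℤ) : ℝ) by push_cast; ring,
    nid_add_intCast]

lemma exists_intCast_eq_div_iff {n : ℕ} (hn : n ≠ 0) (a : ℤ) :
    (∃ m : ℤ, (a : ℝ) / n = m) ↔ (n : ℤ) ∣ a := by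
  have hn' : (n : ℝ) ≠ 0 := by exact_mod_cast hn
  refine ⟨fun ⟨m, hm⟩ => ⟨m, ?_⟩, fun ⟨m, hm⟩ => ⟨m, ?_⟩⟩
  · rw [div_eq_iff hn'] at hm
    exact_mod_cast hm.trans (mul_comm _ _)
  · rw [hm]; push_cast; field_simp

lemma nid_intCast_div_eq_zero_iff {n : ℕ} (hn : n ≠ 0) (a : ℤ) :
    nid ((a : ℝ) / n) = 0 ↔ (n : ℤ) ∣ a := by
  rw [nid_eq_zero_iff, exists_intCast_eq_div_iff hn]

lemma nid_intCast_emod_mul_div (n : ℕ) (j c : ℤ) :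
    nid (((j % n : ℤ) : ℝ) * c / n) = nid ((j : ℝ) * c / n) := by
  rcases eq_or_ne n 0 with rfl | hn
  · simp
  have hj : (j : ℝ) = ((j % n : ℤ) : ℝ) + n * ((j / n : ℤ) : ℝ) := by
    exact_mod_cast (Int.emod_add_mul_ediv j n).symm
  rw [hj, show (((j % n : ℤ) : ℝ) + n * ((j / n : ℤ) : ℝ)) * c / n
      = ((j % n : ℤ) : ℝ) * c / n + ((j / n * c : ℤ) : ℝ) by push_cast; field_simp,
    nid_add_intCast]

lemma dvd_of_forall_dvd_mul {ι : Type*} [Nonempty ι] {n j : ℤ} {v : ι → ℤ}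
    (hco : ∀ k, IsCoprime (v k) n) (h : ∀ k, n ∣ j * v k) : n ∣ j :=
  let k := Classical.arbitrary ι
  (hco k).symm.dvd_of_dvd_mul_right (h k)

lemma sum_nid_sq_pos {d n : ℕ} [Nonempty (Fin d)] (hn : n ≠ 0) {v : Fin d → ℤ}
    (hco : ∀ k, IsCoprime (v k) n) {j : ℤ} (hj : ¬ (n : ℤ) ∣ j) :
    0 < ∑ k, nid ((j : ℝ) * v k / n) ^ 2 := by
  refine Finset.sum_pos' (fun k _ => sq_nonneg _) ?_
  by_contra! h
  refine hj (dvd_of_forall_dvd_mul hco fun k => ?_)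
  rw [← nid_intCast_div_eq_zero_iff hn, Int.cast_mul]
  exact pow_eq_zero_iff two_ne_zero |>.mp
    (le_antisymm (h k (Finset.mem_univ k)) (sq_nonneg _))

section Design

variable {d : ℕ}

noncomputable def lhdPoint (n : ℕ) (v δ : Fin d → ℤ) (i : ℤ) : Fin d → ℝ :=
  fun k => Int.fract ((i : ℝ) * v k / n + δ k / n + 1 / (2 * n))

lemma lattice_coord_ne_intCast {n : ℕ} (hn : n ≠ 0) (i c e m : ℤ) :
    (i : ℝ) * c / n + e / n + 1 / (2 * n) ≠ m := by
  have hn' : (n : ℝ) ≠ 0 := by exact_mod_cast hn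
  intro h
  field_simp at h
  have : 2 * (i * c + e) + 1 = 2 * (n * m) := by
    have h' : ((i * c + e) * 2 + 1 : ℤ) = n * 2 * m := by exact_mod_cast h
    linear_combination h'
  omega

lemma lhdPoint_mem (n : ℕ) (v δ : Fin d → ℤ) (i : ℤ) :
    lhdPoint n v δ i ∈ LHDset d n v (fun k => δ k) := by
  refine ⟨⟨fun k => -⌊(i : ℝ) * v k / n + δ k / n + 1 / (2 * n)⌋, i, ?_⟩,
    fun k => ⟨Int.fract_nonneg _, (Int.fract_lt_one _).le⟩⟩
  funext k
  simp only [lhdPoint, Int.fract, Int.cast_neg]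
  ring

lemma exists_eq_lhdPoint_of_mem {n : ℕ} (hn : n ≠ 0) {v δ : Fin d → ℤ} {x : Fin d → ℝ}
    (hx : x ∈ LHDset d n v (fun k => δ k)) : ∃ i : ℤ, x = lhdPoint n v δ i := by
  obtain ⟨⟨z, i, rfl⟩, hbd⟩ := hx
  refine ⟨i, funext fun k => ?_⟩
  set r : ℝ := (i : ℝ) * v k / n + δ k / n + 1 / (2 * n)
  have hxk : (z k : ℝ) + r ∈ Set.Icc (0 : ℝ) 1 := by
    convert hbd k using 1
    simp only [r]
    ring
  have hlt : (z k : ℝ) + r < 1 := lt_of_le_of_ne hxk.2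
    fun h => lattice_coord_ne_intCast hn i (v k) (δ k) (1 - z k) (by push_cast; linarith)
  calc _ = (z k : ℝ) + r := by simp only [r]; ring
    _ = Int.fract ((z k : ℝ) + r) := (Int.fract_eq_self.mpr ⟨hxk.1, hlt⟩).symm
    _ = lhdPoint n v δ i k := Int.fract_intCast_add _ _

lemma lattice_coord_sub (n : ℕ) (v δ : Fin d → ℤ) (i i' : ℤ) (k : Fin d) :
    ((i : ℝ) * v k / n + δ k / n + 1 / (2 * n)) - ((i' : ℝ) * v k / n + δ k / n + 1 / (2 * n))
      = ((i - i' : ℤ) * v k : ℤ) / n := by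
  push_cast; ring

lemma lhdPoint_eq_lhdPoint_iff [Nonempty (Fin d)] {n : ℕ} (hn : n ≠ 0) {v : Fin d → ℤ}
    (hco : ∀ k, IsCoprime (v k) n) (δ : Fin d → ℤ) (i i' : ℤ) :
    lhdPoint n v δ i = lhdPoint n v δ i' ↔ (n : ℤ) ∣ i - i' := by
  simp only [lhdPoint, funext_iff, Int.fract_eq_fract, lattice_coord_sub,
    exists_intCast_eq_div_iff hn]
  exact ⟨dvd_of_forall_dvd_mul hco, fun h k => h.mul_right _⟩

lemma wdist_lhdPoint_sub_lhdPoint (n : ℕ) (v δ : Fin d → ℤ) (i i' : ℤ) :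
    wdist (lhdPoint n v δ i - lhdPoint n v δ i') =
      √(∑ k, nid (((i - i' : ℤ) : ℝ) * v k / n) ^ 2) := by
  simp only [wdist, Pi.sub_apply, lhdPoint, nid_fract_sub_fract, lattice_coord_sub,
    Int.cast_mul]

end Design

lemma setOf_separation_eq {d n : ℕ} [Nonempty (Fin d)] (hn : n ≠ 0) {v : Fin d → ℤ}
    (hco : ∀ k, IsCoprime (v k) n) (δ : Fin d → ℤ) (g : ℝ → ℝ) :
    {r : ℝ | ∃ x ∈ LHDset d n v (fun k => δ k), ∃ y ∈ LHDset d n v (fun k => δ k),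
        x ≠ y ∧ r = g (wdist (x - y))} =
      {r : ℝ | ∃ i : ℕ, 1 ≤ i ∧ i ≤ n - 1 ∧
        r = g (√(∑ k, nid ((i : ℝ) * v k / n) ^ 2))} := by
  have hn' : (0 : ℤ) < n := by omega
  ext r
  constructor
  · rintro ⟨x, hx, y, hy, hxy, rfl⟩
    obtain ⟨i, rfl⟩ := exists_eq_lhdPoint_of_mem hn hx
    obtain ⟨i', rfl⟩ := exists_eq_lhdPoint_of_mem hn hy
    have hj : (i - i') % n ≠ 0 := fun h =>
      hxy ((lhdPoint_eq_lhdPoint_iff hn hco δ i i').mpr (Int.dvd_of_emod_eq_zero h))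
    have hj₀ := Int.emod_nonneg (i - i') hn'.ne'
    have hjn := Int.emod_lt_of_pos (i - i') hn'
    refine ⟨((i - i') % n).toNat, by omega, by omega, ?_⟩
    have hcast : (((i - i') % n).toNat : ℝ) = (((i - i') % n : ℤ) : ℝ) := by
      exact_mod_cast Int.toNat_of_nonneg hj₀
    simp only [wdist_lhdPoint_sub_lhdPoint, hcast, nid_intCast_emod_mul_div]
  · rintro ⟨i, hi₁, hin, rfl⟩
    have hi : ¬ (n : ℤ) ∣ (i : ℤ) - 0 := by
      rw [sub_zero, Int.natCast_dvd_natCast]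
      exact Nat.not_dvd_of_pos_of_lt hi₁ (by omega)
    refine ⟨_, lhdPoint_mem n v δ i, _, lhdPoint_mem n v δ 0,
      mt (lhdPoint_eq_lhdPoint_iff hn hco δ i 0).mp hi, ?_⟩
    rw [wdist_lhdPoint_sub_lhdPoint, sub_zero, Int.cast_natCast]

lemma csSup_inv_sqrt_eq_inv_sqrt_csInf {f : ℕ → ℝ} {a b : ℕ} (hab : a ≤ b)
    (hf : ∀ i, a ≤ i → i ≤ b → 0 < f i) :
    sSup {r : ℝ | ∃ i, a ≤ i ∧ i ≤ b ∧ r = (√(f i))⁻¹} =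
      (√(sInf {s : ℝ | ∃ i, a ≤ i ∧ i ≤ b ∧ s = f i}))⁻¹ := by
  set C := {s : ℝ | ∃ i, a ≤ i ∧ i ≤ b ∧ s = f i}
  have hC : C = f '' Set.Icc a b := by
    ext s; simp only [C, Set.mem_ofPred_eq, Set.mem_image, Set.mem_Icc]; aesop
  have hCfin : C.Finite := hC ▸ (Set.finite_Icc a b).image f
  obtain ⟨i₀, hi₀a, hi₀b, hi₀⟩ : sInf C ∈ C :=
    Set.Nonempty.csInf_mem ⟨f a, a, le_rfl, hab, rfl⟩ hCfin
  refine IsGreatest.csSup_eq ⟨⟨i₀, hi₀a, hi₀b, by rw [hi₀]⟩, ?_⟩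
  rintro r ⟨i, hia, hib, rfl⟩
  rw [hi₀]
  exact inv_anti₀ (Real.sqrt_pos.mpr (hf i₀ hi₀a hi₀b))
    (Real.sqrt_le_sqrt (hi₀ ▸ csInf_le hCfin.bddBelow ⟨i, hia, hib, rfl⟩))

/-- the wrap-around separation distance of L(n,v,δ) equals
min over i = 1,…,n−1 of (Σ_k w(i·v_k/n)²)^{1/2}; equivalently, the wrap-around
reciprocal separation criterion c_WS equals that minimum to the power −1/2. -/
theorem stmt_3 (d n : ℕ) (hd : 1 ≤ d) (hn : 2 ≤ n) (v δ : Fin d → ℤ)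
    (hco : ∀ k, IsCoprime (v k) (n : ℤ))
    (S : Set (Fin d → ℝ)) (hS : S = LHDset d n v (fun k => (δ k : ℝ))) :
    sInf {r : ℝ | ∃ x ∈ S, ∃ y ∈ S, x ≠ y ∧ r = wdist (x - y)} =
      sInf {r : ℝ | ∃ i : ℕ, 1 ≤ i ∧ i ≤ n - 1 ∧
        r = Real.sqrt (∑ k, nid ((i : ℝ) * (v k : ℝ) / n) ^ 2)} ∧
    sSup {r : ℝ | ∃ x ∈ S, ∃ y ∈ S, x ≠ y ∧ r = (wdist (x - y))⁻¹} =
      (Real.sqrt (sInf {s : ℝ | ∃ i : ℕ, 1 ≤ i ∧ i ≤ n - 1 ∧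
        s = ∑ k, nid ((i : ℝ) * (v k : ℝ) / n) ^ 2}))⁻¹ := by
  subst hS
  have hn₀ : n ≠ 0 := by omega
  have : Nonempty (Fin d) := Fin.pos_iff_nonempty.mp hd
  refine ⟨congrArg sInf (setOf_separation_eq hn₀ hco δ fun t => t), ?_⟩
  rw [setOf_separation_eq hn₀ hco δ fun t => t⁻¹]
  refine csSup_inv_sqrt_eq_inv_sqrt_csInf (by omega) fun i hi₁ hin => ?_
  have hi : ¬ (n : ℤ) ∣ (i : ℤ) :=
    Int.natCast_dvd_natCast.not.mpr (Nat.not_dvd_of_pos_of_lt hi₁ (by omega))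
  simpa using sum_nid_sq_pos hn₀ hco hi
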